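/- Let A be an n×m real matrix with no zero rows and no zero columns. Then the infimum, over all multiplicities k : Fin n → ℕ₊ and l : Fin m → ℕ₊, of √(n'·m')·‖A'‖ — where A' is the split matrix of A with multiplicities k and l, and n' = Σᵢ k_i, m' = Σⱼ l_j — equals the infimum, over all vectors w ∈ ℝⁿ and v ∈ ℝ^m with strictly positive entries, of ‖D_w⁻¹ A D_v⁻¹‖·‖w‖·‖v‖. Here ‖·‖ is the ℓ²→ℓ² operator norm and D_w is the diagonal matrix with w on the diagonal. -/

import Mathlib

open scoped BigOperators

/-- The ℓ²→ℓ² operator norm of a real matrix. -/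
noncomputable def l2OpNorm {α β : Type*} [Fintype α] [Fintype β] [DecidableEq β]
    (A : Matrix α β ℝ) : ℝ :=
  ‖LinearMap.toContinuousLinearMap (Matrix.toEuclideanLin A)‖

/-- The ∞→1 norm of a real matrix: `max_{x ∈ {-1,1}ⁿ, y ∈ {-1,1}^m} xᵀ A y`. -/
noncomputable def normInftyOne {α β : Type*} [Fintype α] [Fintype β] (A : Matrix α β ℝ) : ℝ :=
  ⨆ p : (α → Bool) × (β → Bool),
    ∑ i, ∑ j, (if p.1 i then (1:ℝ) else -1) * A i j * (if p.2 j then (1:ℝ) else -1)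

/-- The Grothendieck norm: sup over `k` and families of unit vectors of `Σ a_{ij} ⟨p_i, q_j⟩`. -/
noncomputable def grothendieckNorm {α β : Type*} [Fintype α] [Fintype β]
    (A : Matrix α β ℝ) : ℝ :=
  sSup { r : ℝ | ∃ (k : ℕ) (p : α → EuclideanSpace ℝ (Fin k)) (q : β → EuclideanSpace ℝ (Fin k)),
    (∀ i, ‖p i‖ = 1) ∧ (∀ j, ‖q j‖ = 1) ∧
    r = ∑ i, ∑ j, A i j * (inner ℝ (p i) (q j) : ℝ) }

/-- The matrix obtained from `A` by splitting row `i` into `k i` equal rows and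
column `j` into `l j` equal columns. -/
noncomputable def splitMatrix {n m : ℕ} (A : Matrix (Fin n) (Fin m) ℝ)
    (k : Fin n → ℕ+) (l : Fin m → ℕ+) :
    Matrix ((i : Fin n) × Fin (k i : ℕ)) ((j : Fin m) × Fin (l j : ℕ)) ℝ :=
  fun p q => A p.1 q.1 / (((k p.1 : ℕ) : ℝ) * ((l q.1 : ℕ) : ℝ))

/-!
Let `P_k` be the isometry `ℝⁿ → ℝ^{n'}` spreading coordinate `i` evenly over its `k i` copies,
with entries `1/√(k i)`. Then `A' = P_k (D_{√k}⁻¹ A D_{√l}⁻¹) P_lᵀ`, so `‖A'‖ = ‖D_{√k}⁻¹ A D_{√l}⁻¹‖`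
and `√(n'm')‖A'‖` is the weighted quantity at `w = √k`, `v = √l`.

Conversely, `‖D_w⁻¹ A D_v⁻¹‖` can only decrease when the weights grow, and it scales by `s⁻²` when
both weights are multiplied by `s`. Taking `k i = ⌊s² (w i)²⌋ + 1 ≥ s² (w i)²` and likewise for `l`,
the splitting has value at most `‖D_w⁻¹ A D_v⁻¹‖ √(‖w‖² + n/s²) √(‖v‖² + m/s²)`, which tends to the
weighted quantity as `s → ∞`.
-/

open scoped Matrix.Norms.L2Operator Matrix
open Matrix Filter Topology

theorem norm_div_le_one_of_le {ι : Type*} [Fintype ι] {u u' : ι → ℝ} (hu : ∀ i, 0 < u i)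
    (huu' : u ≤ u') : ‖u / u'‖ ≤ 1 := by
  refine (pi_norm_le_iff_of_nonneg zero_le_one).2 fun i => ?_
  have hu' := (hu i).trans_le (huu' i)
  rw [Pi.div_apply, Real.norm_eq_abs, abs_div, abs_of_pos (hu i), abs_of_pos hu',
    div_le_one hu']
  exact huu' i

namespace Matrix

section L2OpNorm

variable {𝕜 α α' β β' : Type*} [RCLike 𝕜] [Fintype α] [Fintype α'] [Fintype β] [Fintype β']
  [DecidableEq α] [DecidableEq β]

theorem l2_opNorm_mul_of_conjTranspose_mul_self_eq_one {P : Matrix α' α 𝕜}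
    (hP : Pᴴ * P = 1) (M : Matrix α β 𝕜) : ‖P * M‖ = ‖M‖ := by
  have h := l2_opNorm_conjTranspose_mul_self (P * M)
  rw [conjTranspose_mul, Matrix.mul_assoc, ← Matrix.mul_assoc Pᴴ, hP, Matrix.one_mul,
    l2_opNorm_conjTranspose_mul_self] at h
  exact ((mul_self_inj (norm_nonneg _) (norm_nonneg _)).1 h).symm

theorem l2_opNorm_mul_mul_conjTranspose_of_conjTranspose_mul_self_eq_one
    [DecidableEq α'] [DecidableEq β'] {P : Matrix α' α 𝕜} {Q : Matrix β' β 𝕜}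
    (hP : Pᴴ * P = 1) (hQ : Qᴴ * Q = 1) (M : Matrix α β 𝕜) : ‖P * M * Qᴴ‖ = ‖M‖ := by
  rw [Matrix.mul_assoc, l2_opNorm_mul_of_conjTranspose_mul_self_eq_one hP,
    ← l2_opNorm_conjTranspose, conjTranspose_mul, conjTranspose_conjTranspose,
    l2_opNorm_mul_of_conjTranspose_mul_self_eq_one hQ, l2_opNorm_conjTranspose]

theorem l2_opNorm_diagonal_mul_mul_diagonal_le {c : α → 𝕜} {d : β → 𝕜} (hc : ‖c‖ ≤ 1)
    (hd : ‖d‖ ≤ 1) (M : Matrix α β 𝕜) : ‖diagonal c * M * diagonal d‖ ≤ ‖M‖ :=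
  calc ‖diagonal c * M * diagonal d‖ ≤ ‖c‖ * ‖M‖ * ‖d‖ := by
        grw [l2_opNorm_mul, l2_opNorm_mul, l2_opNorm_diagonal, l2_opNorm_diagonal]
    _ ≤ 1 * ‖M‖ * 1 := by gcongr
    _ = ‖M‖ := by ring

end L2OpNorm

section Weights

variable {α β : Type*} [Fintype α] [Fintype β] [DecidableEq α] [DecidableEq β]

theorem l2_opNorm_diagonal_inv_mul_mul_diagonal_inv_le {w w' : α → ℝ} {v v' : β → ℝ}
    (hw : ∀ i, 0 < w i) (hv : ∀ j, 0 < v j) (hww' : w ≤ w') (hvv' : v ≤ v')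
    (A : Matrix α β ℝ) :
    ‖diagonal w'⁻¹ * A * diagonal v'⁻¹‖ ≤ ‖diagonal w⁻¹ * A * diagonal v⁻¹‖ := by
  have hfactor : diagonal w'⁻¹ * A * diagonal v'⁻¹ =
      diagonal (w / w') * (diagonal w⁻¹ * A * diagonal v⁻¹) * diagonal (v / v') := by
    ext i j
    simp only [mul_diagonal, diagonal_mul, Pi.div_apply, Pi.inv_apply]
    have := (hw i).ne'
    have := (hv j).ne'
    field_simp
  rw [hfactor]
  exact l2_opNorm_diagonal_mul_mul_diagonal_le (norm_div_le_one_of_le hw hww')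
    (norm_div_le_one_of_le hv hvv') _

theorem diagonal_inv_smul_mul_mul_diagonal_inv_smul (c : ℝ) (w : α → ℝ) (v : β → ℝ)
    (A : Matrix α β ℝ) :
    diagonal (c • w)⁻¹ * A * diagonal (c • v)⁻¹ =
      (c * c)⁻¹ • (diagonal w⁻¹ * A * diagonal v⁻¹) := by
  ext i j
  simp only [mul_diagonal, diagonal_mul, Pi.inv_apply, Pi.smul_apply, smul_eq_mul,
    Matrix.smul_apply, mul_inv]
  ring

end Weights

end Matrix

noncomputable def succFloor (x : ℝ) : ℕ+ := ⌊x⌋₊.succPNat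

theorem coe_succFloor (x : ℝ) : ((succFloor x : ℕ) : ℝ) = ⌊x⌋₊ + 1 := by
  simp [succFloor]

theorem lt_succFloor (x : ℝ) : x < ((succFloor x : ℕ) : ℝ) := by
  rw [coe_succFloor]
  exact Nat.lt_floor_add_one x

theorem sum_succFloor_le {ι : Type*} [Fintype ι] {u : ι → ℝ} (hu : ∀ i, 0 ≤ u i) :
    ∑ i, ((succFloor (u i) : ℕ) : ℝ) ≤ ∑ i, u i + Fintype.card ι := by
  calc ∑ i, ((succFloor (u i) : ℕ) : ℝ) ≤ ∑ i, (u i + 1) := by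
        gcongr with i
        rw [coe_succFloor]
        gcongr
        exact Nat.floor_le (hu i)
    _ = ∑ i, u i + Fintype.card ι := by simp [Finset.sum_add_distrib]

theorem l2OpNorm_eq_l2_opNorm {α β : Type*} [Fintype α] [Fintype β] [DecidableEq β]
    (A : Matrix α β ℝ) : l2OpNorm A = ‖A‖ := rfl

noncomputable def weightValue {α β : Type*} [Fintype α] [Fintype β] [DecidableEq α]
    [DecidableEq β] (A : Matrix α β ℝ) (w : α → ℝ) (v : β → ℝ) : ℝ :=
  l2OpNorm (diagonal w⁻¹ * A * diagonal v⁻¹) * √(∑ i, w i ^ 2) * √(∑ j, v j ^ 2)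

theorem weightValue_nonneg {α β : Type*} [Fintype α] [Fintype β] [DecidableEq α]
    [DecidableEq β] (A : Matrix α β ℝ) (w : α → ℝ) (v : β → ℝ) : 0 ≤ weightValue A w v :=
  mul_nonneg (mul_nonneg (norm_nonneg _) (Real.sqrt_nonneg _)) (Real.sqrt_nonneg _)

noncomputable def splitIsometry {α : Type*} [DecidableEq α] (k : α → ℕ+) :
    Matrix ((i : α) × Fin (k i : ℕ)) α ℝ :=
  of fun p i => if p.1 = i then (√((k i : ℕ) : ℝ))⁻¹ else 0

theorem splitIsometry_conjTranspose_mul_self {α : Type*} [Fintype α] [DecidableEq α]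
    (k : α → ℕ+) : (splitIsometry k)ᴴ * splitIsometry k = 1 := by
  ext i i'
  by_cases h : i = i'
  · subst h
    have hk : (0 : ℝ) < ((k i : ℕ) : ℝ) := by exact_mod_cast (k i).pos
    simp only [splitIsometry, conjTranspose_eq_transpose_of_trivial, mul_apply,
      transpose_apply, of_apply, mul_ite, ite_mul, zero_mul, mul_zero, Fintype.sum_sigma,
      Finset.sum_ite_irrel, Finset.sum_const_zero, Finset.sum_ite_eq', Finset.mem_univ,
      ↓reduceIte, Finset.sum_const, Finset.card_univ, Fintype.card_fin, nsmul_eq_mul,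
      one_apply_eq]
    rw [← mul_inv, Real.mul_self_sqrt hk.le, mul_inv_cancel₀ hk.ne']
  · simp [mul_apply, splitIsometry, Fintype.sum_sigma, Ne.symm h, one_apply_ne h]

section Splitting

variable {n m : ℕ} (A : Matrix (Fin n) (Fin m) ℝ)

theorem splitMatrix_eq (k : Fin n → ℕ+) (l : Fin m → ℕ+) :
    splitMatrix A k l = splitIsometry k *
      (diagonal (fun i => √((k i : ℕ) : ℝ))⁻¹ * A * diagonal (fun j => √((l j : ℕ) : ℝ))⁻¹) *
        (splitIsometry l)ᴴ := by
  ext p q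
  have hk : (0 : ℝ) < ((k p.1 : ℕ) : ℝ) := by exact_mod_cast (k p.1).pos
  have hl : (0 : ℝ) < ((l q.1 : ℕ) : ℝ) := by exact_mod_cast (l q.1).pos
  simp only [splitMatrix, splitIsometry, conjTranspose_eq_transpose_of_trivial, mul_apply,
    of_apply, diagonal_apply, Pi.inv_apply, ite_mul, zero_mul, Finset.sum_ite_eq,
    Finset.mem_univ, ↓reduceIte, mul_ite, mul_zero, Finset.sum_ite_eq', transpose_apply]
  field_simp
  rw [Real.sq_sqrt hk.le, Real.sq_sqrt hl.le]

theorem l2OpNorm_splitMatrix (k : Fin n → ℕ+) (l : Fin m → ℕ+) :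
    l2OpNorm (splitMatrix A k l) =
      ‖diagonal (fun i => √((k i : ℕ) : ℝ))⁻¹ * A * diagonal (fun j => √((l j : ℕ) : ℝ))⁻¹‖ := by
  rw [l2OpNorm_eq_l2_opNorm, splitMatrix_eq,
    l2_opNorm_mul_mul_conjTranspose_of_conjTranspose_mul_self_eq_one
      (splitIsometry_conjTranspose_mul_self k) (splitIsometry_conjTranspose_mul_self l)]

noncomputable def splitValue (k : Fin n → ℕ+) (l : Fin m → ℕ+) : ℝ :=
  √((∑ i, ((k i : ℕ) : ℝ)) * (∑ j, ((l j : ℕ) : ℝ))) * l2OpNorm (splitMatrix A k l)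

theorem splitValue_nonneg (k : Fin n → ℕ+) (l : Fin m → ℕ+) : 0 ≤ splitValue A k l :=
  mul_nonneg (Real.sqrt_nonneg _) (norm_nonneg (splitMatrix A k l))

theorem splitValue_eq_weightValue (k : Fin n → ℕ+) (l : Fin m → ℕ+) :
    splitValue A k l =
      weightValue A (fun i => √((k i : ℕ) : ℝ)) (fun j => √((l j : ℕ) : ℝ)) := by
  rw [splitValue, weightValue, l2OpNorm_splitMatrix, l2OpNorm_eq_l2_opNorm,
    Real.sqrt_mul (by positivity)]
  simp only [Nat.cast_nonneg, Real.sq_sqrt]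
  ring

variable {A}

theorem splitValue_le_of_sq_le {w : Fin n → ℝ} {v : Fin m → ℝ} (hw : ∀ i, 0 < w i)
    (hv : ∀ j, 0 < v j) {k : Fin n → ℕ+} {l : Fin m → ℕ+} (hk : ∀ i, w i ^ 2 ≤ (k i : ℕ))
    (hl : ∀ j, v j ^ 2 ≤ (l j : ℕ)) :
    splitValue A k l ≤
      ‖diagonal w⁻¹ * A * diagonal v⁻¹‖ * √(∑ i, ((k i : ℕ) : ℝ)) * √(∑ j, ((l j : ℕ) : ℝ)) := by
  rw [splitValue_eq_weightValue, weightValue]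
  simp only [Nat.cast_nonneg, Real.sq_sqrt]
  gcongr
  refine l2_opNorm_diagonal_inv_mul_mul_diagonal_inv_le hw hv (fun i => ?_) (fun j => ?_) A
  · exact Real.le_sqrt_of_sq_le (hk i)
  · exact Real.le_sqrt_of_sq_le (hl j)

end Splitting

section Approximation

variable {n m : ℕ} {A : Matrix (Fin n) (Fin m) ℝ} {w : Fin n → ℝ} {v : Fin m → ℝ}

theorem splitValue_succFloor_le (hw : ∀ i, 0 < w i) (hv : ∀ j, 0 < v j) {s : ℝ} (hs : 0 < s) :
    splitValue A (fun i => succFloor ((s * w i) ^ 2)) (fun j => succFloor ((s * v j) ^ 2)) ≤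
      ‖diagonal w⁻¹ * A * diagonal v⁻¹‖ * √(∑ i, w i ^ 2 + n / s ^ 2) *
        √(∑ j, v j ^ 2 + m / s ^ 2) := by
  have hsum {N : ℕ} (u : Fin N → ℝ) :
      ∑ i, ((succFloor ((s * u i) ^ 2) : ℕ) : ℝ) ≤ s ^ 2 * (∑ i, u i ^ 2 + N / s ^ 2) :=
    calc _ ≤ ∑ i, (s * u i) ^ 2 + Fintype.card (Fin N) := sum_succFloor_le fun i => sq_nonneg _
      _ = _ := by
        simp only [mul_pow, ← Finset.mul_sum, Fintype.card_fin]
        field_simp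
  have hsqrt {x : ℝ} (hx : 0 ≤ x) : √(s ^ 2 * x) = s * √x := by
    rw [Real.sqrt_mul (sq_nonneg s), Real.sqrt_sq hs.le]
  calc _ ≤ ‖diagonal (s • w)⁻¹ * A * diagonal (s • v)⁻¹‖ *
        √(∑ i, ((succFloor ((s * w i) ^ 2) : ℕ) : ℝ)) *
        √(∑ j, ((succFloor ((s * v j) ^ 2) : ℕ) : ℝ)) :=
        splitValue_le_of_sq_le (fun i => mul_pos hs (hw i)) (fun j => mul_pos hs (hv j))
          (fun i => (lt_succFloor _).le) (fun j => (lt_succFloor _).le)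
    _ ≤ ‖diagonal (s • w)⁻¹ * A * diagonal (s • v)⁻¹‖ * √(s ^ 2 * (∑ i, w i ^ 2 + n / s ^ 2)) *
        √(s ^ 2 * (∑ j, v j ^ 2 + m / s ^ 2)) := by
        gcongr
        exacts [hsum w, hsum v]
    _ = _ := by
        rw [diagonal_inv_smul_mul_mul_diagonal_inv_smul, norm_smul, hsqrt (by positivity),
          hsqrt (by positivity), Real.norm_eq_abs, abs_of_pos (by positivity)]
        field_simp

theorem sInf_splitValue_le_weightValue (hw : ∀ i, 0 < w i) (hv : ∀ j, 0 < v j) :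
    sInf {r | ∃ k l, r = splitValue A k l} ≤ weightValue A w v := by
  have hdecay (c : ℝ) : Tendsto (fun s : ℝ => c / s ^ 2) atTop (𝓝 0) :=
    tendsto_const_nhds.div_atTop (tendsto_pow_atTop two_ne_zero)
  have hlim : Tendsto (fun s : ℝ => ‖diagonal w⁻¹ * A * diagonal v⁻¹‖ *
      √(∑ i, w i ^ 2 + n / s ^ 2) * √(∑ j, v j ^ 2 + m / s ^ 2)) atTop
      (𝓝 (weightValue A w v)) := by
    rw [weightValue, l2OpNorm_eq_l2_opNorm]
    simpa using (tendsto_const_nhds.mul ((hdecay n).const_add _).sqrt).mul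
      ((hdecay m).const_add _).sqrt
  have hbdd : BddBelow {r | ∃ k l, r = splitValue A k l} := by
    refine ⟨0, ?_⟩
    rintro r ⟨k, l, rfl⟩
    exact splitValue_nonneg A k l
  refine ge_of_tendsto hlim ?_
  filter_upwards [eventually_gt_atTop 0] with s hs
  exact (csInf_le hbdd ⟨_, _, rfl⟩).trans (splitValue_succFloor_le hw hv hs)

end Approximation

theorem inf_splittings_eq_inf_weights_general (n m : ℕ) (A : Matrix (Fin n) (Fin m) ℝ) :
    sInf { r : ℝ | ∃ (k : Fin n → ℕ+) (l : Fin m → ℕ+),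
        r = Real.sqrt ((∑ i, ((k i : ℕ) : ℝ)) * (∑ j, ((l j : ℕ) : ℝ))) *
            l2OpNorm (splitMatrix A k l) }
      = sInf { r : ℝ | ∃ (w : Fin n → ℝ) (v : Fin m → ℝ),
        (∀ i, 0 < w i) ∧ (∀ j, 0 < v j) ∧
        r = l2OpNorm (Matrix.diagonal (fun i => (w i)⁻¹) * A *
              Matrix.diagonal (fun j => (v j)⁻¹)) *
            Real.sqrt (∑ i, w i ^ 2) * Real.sqrt (∑ j, v j ^ 2) } := by
  change sInf {r | ∃ k l, r = splitValue A k l} =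
    sInf {r | ∃ w v, (∀ i, 0 < w i) ∧ (∀ j, 0 < v j) ∧ r = weightValue A w v}
  apply le_antisymm
  · refine le_csInf ⟨_, 1, 1, fun _ => one_pos, fun _ => one_pos, rfl⟩ ?_
    rintro r ⟨w, v, hw, hv, rfl⟩
    exact sInf_splitValue_le_weightValue hw hv
  · refine csInf_le_csInf ⟨0, ?_⟩ ⟨_, 1, 1, rfl⟩ ?_
    · rintro r ⟨w, v, -, -, rfl⟩
      exact weightValue_nonneg A w v
    · rintro r ⟨k, l, rfl⟩
      exact ⟨_, _, fun i => by positivity, fun j => by positivity,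
        splitValue_eq_weightValue A k l⟩

/-- For a matrix `A` without zero rows or columns, the infimum of
`√(n'·m')·‖A'‖` over all splittings `A'` of `A` equals the infimum of
`‖D_w⁻¹ A D_v⁻¹‖·‖w‖·‖v‖` over all positive weight vectors `w, v`. -/
theorem inf_splittings_eq_inf_weights (n m : ℕ) (A : Matrix (Fin n) (Fin m) ℝ)
    (hrow : ∀ i, ∃ j, A i j ≠ 0) (hcol : ∀ j, ∃ i, A i j ≠ 0) :
    sInf { r : ℝ | ∃ (k : Fin n → ℕ+) (l : Fin m → ℕ+),
        r = Real.sqrt ((∑ i, ((k i : ℕ) : ℝ)) * (∑ j, ((l j : ℕ) : ℝ))) *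
            l2OpNorm (splitMatrix A k l) }
      = sInf { r : ℝ | ∃ (w : Fin n → ℝ) (v : Fin m → ℝ),
        (∀ i, 0 < w i) ∧ (∀ j, 0 < v j) ∧
        r = l2OpNorm (Matrix.diagonal (fun i => (w i)⁻¹) * A *
              Matrix.diagonal (fun j => (v j)⁻¹)) *
            Real.sqrt (∑ i, w i ^ 2) * Real.sqrt (∑ j, v j ^ 2) } :=
  inf_splittings_eq_inf_weights_general n m A
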